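/- arXiv:2511.18025 — 2 statements merged into one kernel-verified Lean document; each statement's English description precedes it below -/
import Mathlib

section
/- Let Z have the Laplace distribution with density p(z) = (1/(2b))·e^{−|z|/b} on ℝ with scale b > 0. Then for any shifts μ, μ′ ∈ ℝ and any measurable set S ⊆ ℝ, Pr[μ + Z ∈ S] ≤ e^{|μ−μ′|/b} · Pr[μ′ + Z ∈ S]. -/
/-! Moving the centre of the Laplace density from `μ'` to `μ` multiplies it pointwise by at most
`exp (|μ - μ'| / b)`, since `|z - μ| ≥ |z - μ'| - |μ - μ'|`. A translate of a measure with density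
has the translated density, so the pointwise bound integrates to an inequality of measures. -/

open MeasureTheory
open scoped ENNReal

/-- The Laplace distribution with scale `b`, given by its density
`(1/(2b)) * exp (-|z|/b)` with respect to Lebesgue measure. -/
noncomputable def laplaceMeasure (b : ℝ) : Measure ℝ :=
  volume.withDensity (fun z => ENNReal.ofReal (1 / (2 * b) * Real.exp (-|z| / b)))

theorem map_add_left_withDensity {G : Type*} [MeasurableSpace G] [AddGroup G] [MeasurableAdd G]
    (μ : Measure G) [μ.IsAddLeftInvariant] (f : G → ℝ≥0∞) (c : G) :
    (μ.withDensity f).map (c + ·) = μ.withDensity (fun x => f (-c + x)) := by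
  ext s hs
  rw [Measure.map_apply (measurable_const_add c) hs,
    withDensity_apply _ (hs.preimage (measurable_const_add c)), withDensity_apply _ hs,
    ← (measurePreserving_add_left μ c).setLIntegral_comp_preimage_emb
      (measurableEmbedding_addLeft c) (fun x => f (-c + x))]
  simp only [neg_add_cancel_left]

theorem withDensity_le_smul_withDensity {α : Type*} [MeasurableSpace α] {μ : Measure α}
    {f g : α → ℝ≥0∞} {C : ℝ≥0∞} (hC : C ≠ ∞) (h : ∀ x, f x ≤ C * g x) :
    μ.withDensity f ≤ C • μ.withDensity g := by
  rw [← withDensity_smul' C g hC]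
  exact withDensity_mono (ae_of_all _ h)

theorem Real.exp_neg_abs_div_le {b : ℝ} (hb : 0 ≤ b) (x y : ℝ) :
    Real.exp (-|x| / b) ≤ Real.exp (|y - x| / b) * Real.exp (-|y| / b) := by
  rw [← Real.exp_add, Real.exp_le_exp, ← add_div]
  gcongr
  linarith [abs_sub_abs_le_abs_sub y x]

theorem laplaceMeasure_map_add_left_le {b : ℝ} (hb : 0 ≤ b) (μ μ' : ℝ) :
    (laplaceMeasure b).map (μ + ·) ≤
      ENNReal.ofReal (Real.exp (|μ - μ'| / b)) • (laplaceMeasure b).map (μ' + ·) := by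
  rw [laplaceMeasure, map_add_left_withDensity, map_add_left_withDensity]
  refine withDensity_le_smul_withDensity ENNReal.ofReal_ne_top fun z => ?_
  rw [← ENNReal.ofReal_mul (Real.exp_nonneg _), mul_left_comm]
  gcongr
  have h := Real.exp_neg_abs_div_le hb (-μ + z) (-μ' + z)
  rwa [show -μ' + z - (-μ + z) = μ - μ' by ring] at h

theorem laplace_shift_likelihood_ratio_general (b : ℝ) (hb : 0 < b) (μ μ' : ℝ)
    (S : Set ℝ) :
    (laplaceMeasure b).map (fun z => μ + z) S ≤
      ENNReal.ofReal (Real.exp (|μ - μ'| / b)) *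
        (laplaceMeasure b).map (fun z => μ' + z) S :=
  laplaceMeasure_map_add_left_le hb.le μ μ' S

theorem laplace_shift_likelihood_ratio (b : ℝ) (hb : 0 < b) (μ μ' : ℝ)
    (S : Set ℝ) (hS : MeasurableSet S) :
    (laplaceMeasure b).map (fun z => μ + z) S ≤
      ENNReal.ofReal (Real.exp (|μ - μ'| / b)) *
        (laplaceMeasure b).map (fun z => μ' + z) S :=
  laplace_shift_likelihood_ratio_general b hb μ μ' S
end

section
/- Let Q₁, Q₂ be two probability distributions on a finite set and let M be a randomized map such that for all z, z′ and measurable S, Pr[M(z) ∈ S] ≤ e^{c·d(z,z′)} Pr[M(z′) ∈ S], where d is a metric bounded by D on the support. Then for any measurable S, ∑_z Q₁(z) Pr[M(z) ∈ S] ≤ (1 + δ(Q₁,Q₂)(e^{cD} − 1)) · ∑_z Q₂(z) Pr[M(z) ∈ S], where δ is total-variation distance. -/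
open MeasureTheory

lemma aux_real_mix {Z : Type*} [Fintype Z] [Nonempty Z]
    (Q1 Q2 L : Z → ℝ)
    (hQ1nn : ∀ z, 0 ≤ Q1 z) (hQ1sum : ∑ z, Q1 z = 1)
    (hQ2nn : ∀ z, 0 ≤ Q2 z) (hQ2sum : ∑ z, Q2 z = 1)
    (E : ℝ) (hE : 1 ≤ E)
    (hLnn : ∀ z, 0 ≤ L z) (hLE : ∀ z z', L z ≤ E * L z') :
    ∑ z, Q1 z * L z ≤ (1 + ((1 : ℝ) / 2 * ∑ z, |Q1 z - Q2 z|) * (E - 1)) * ∑ z, Q2 z * L z := by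
  obtain ⟨z₀, -, hz₀⟩ := Finset.exists_min_image Finset.univ L ⟨Classical.arbitrary Z, Finset.mem_univ _⟩
  simp only [Finset.mem_univ, forall_true_left] at hz₀
  have hT : L z₀ ≤ ∑ z, Q2 z * L z := by
    calc L z₀ = ∑ z, Q2 z * L z₀ := by rw [← Finset.sum_mul, hQ2sum, one_mul]
    _ ≤ ∑ z, Q2 z * L z := Finset.sum_le_sum fun z _ => mul_le_mul_of_nonneg_left (hz₀ z) (hQ2nn z)
  have hdiff : ∑ z, Q1 z * L z - ∑ z, Q2 z * L z
      = ∑ z, (Q1 z - Q2 z) * (L z - L z₀) := by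
    have : ∑ z, (Q1 z - Q2 z) * L z₀ = 0 := by
      rw [← Finset.sum_mul, Finset.sum_sub_distrib, hQ1sum, hQ2sum, sub_self, zero_mul]
    rw [← Finset.sum_sub_distrib]
    calc ∑ z, (Q1 z * L z - Q2 z * L z) = ∑ z, ((Q1 z - Q2 z) * (L z - L z₀) + (Q1 z - Q2 z) * L z₀) := by
          apply Finset.sum_congr rfl; intro z _; ring
    _ = ∑ z, (Q1 z - Q2 z) * (L z - L z₀) := by rw [Finset.sum_add_distrib, this, add_zero]
  have hterm : ∀ z, (Q1 z - Q2 z) * (L z - L z₀)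
      ≤ (|Q1 z - Q2 z| + (Q1 z - Q2 z)) / 2 * ((E - 1) * L z₀) := by
    intro z
    have h1 : 0 ≤ L z - L z₀ := sub_nonneg.2 (hz₀ z)
    have h2 : L z - L z₀ ≤ (E - 1) * L z₀ := by
      have := hLE z z₀; nlinarith [hLnn z₀]
    have h3 : Q1 z - Q2 z ≤ (|Q1 z - Q2 z| + (Q1 z - Q2 z)) / 2 := by
      have := le_abs_self (Q1 z - Q2 z); linarith
    have h4 : (0:ℝ) ≤ (|Q1 z - Q2 z| + (Q1 z - Q2 z)) / 2 := by
      have := neg_abs_le (Q1 z - Q2 z); linarith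
    calc (Q1 z - Q2 z) * (L z - L z₀) ≤ (|Q1 z - Q2 z| + (Q1 z - Q2 z)) / 2 * (L z - L z₀) :=
          mul_le_mul_of_nonneg_right h3 h1
    _ ≤ (|Q1 z - Q2 z| + (Q1 z - Q2 z)) / 2 * ((E - 1) * L z₀) :=
          mul_le_mul_of_nonneg_left h2 h4
  have hsum : ∑ z, (Q1 z - Q2 z) * (L z - L z₀)
      ≤ ((1:ℝ)/2 * ∑ z, |Q1 z - Q2 z|) * ((E - 1) * L z₀) := by
    calc ∑ z, (Q1 z - Q2 z) * (L z - L z₀)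
        ≤ ∑ z, (|Q1 z - Q2 z| + (Q1 z - Q2 z)) / 2 * ((E - 1) * L z₀) :=
          Finset.sum_le_sum fun z _ => hterm z
    _ = ((1:ℝ)/2 * ∑ z, |Q1 z - Q2 z|) * ((E - 1) * L z₀) := by
          rw [← Finset.sum_mul]
          congr 1
          calc ∑ i, (|Q1 i - Q2 i| + (Q1 i - Q2 i)) / 2
              = (∑ i, |Q1 i - Q2 i| + ∑ i, (Q1 i - Q2 i)) / 2 := by
                rw [← Finset.sum_add_distrib, ← Finset.sum_div]
          _ = (1:ℝ)/2 * ∑ z, |Q1 z - Q2 z| := by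
                rw [Finset.sum_sub_distrib, hQ1sum, hQ2sum]; ring
  have hΔnn : 0 ≤ (1:ℝ)/2 * ∑ z, |Q1 z - Q2 z| := by
    positivity
  have hfinal : ((1:ℝ)/2 * ∑ z, |Q1 z - Q2 z|) * ((E - 1) * L z₀)
      ≤ ((1:ℝ)/2 * ∑ z, |Q1 z - Q2 z|) * ((E - 1) * ∑ z, Q2 z * L z) := by
    apply mul_le_mul_of_nonneg_left _ hΔnn
    exact mul_le_mul_of_nonneg_left hT (by linarith)
  nlinarith [hdiff, hsum, hfinal]

theorem mixture_likelihood_ratio_bound {Z Ω : Type*} [Fintype Z] [Nonempty Z]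
    [MeasurableSpace Ω]
    (Q1 Q2 : Z → ℝ)
    (hQ1nn : ∀ z, 0 ≤ Q1 z) (hQ1sum : ∑ z, Q1 z = 1)
    (hQ2nn : ∀ z, 0 ≤ Q2 z) (hQ2sum : ∑ z, Q2 z = 1)
    (d : Z → Z → ℝ) (c D : ℝ) (hc : 0 ≤ c)
    (hdnn : ∀ z z', 0 ≤ d z z') (hdD : ∀ z z', d z z' ≤ D)
    (M : Z → Measure Ω)
    (hM : ∀ z z' : Z, ∀ S : Set Ω, MeasurableSet S →
        M z S ≤ ENNReal.ofReal (Real.exp (c * d z z')) * M z' S)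
    (S : Set Ω) (hS : MeasurableSet S) :
    ∑ z, ENNReal.ofReal (Q1 z) * M z S ≤
      ENNReal.ofReal
          (1 + ((1 : ℝ) / 2 * ∑ z, |Q1 z - Q2 z|) * (Real.exp (c * D) - 1)) *
        ∑ z, ENNReal.ofReal (Q2 z) * M z S := by
  have hD : 0 ≤ D := le_trans (hdnn (Classical.arbitrary Z) (Classical.arbitrary Z))
    (hdD _ _)
  have hE1 : (1:ℝ) ≤ Real.exp (c * D) := Real.one_le_exp (mul_nonneg hc hD)
  have hΔnn : 0 ≤ (1:ℝ)/2 * ∑ z, |Q1 z - Q2 z| := by positivity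
  have hcoeff : (1:ℝ) ≤ 1 + ((1:ℝ)/2 * ∑ z, |Q1 z - Q2 z|) * (Real.exp (c * D) - 1) := by
    nlinarith
  by_cases hfin : ∀ z, M z S ≠ ⊤
  · -- finite case
    set L : Z → ℝ := fun z => (M z S).toReal with hL
    have hMe : ∀ z, M z S = ENNReal.ofReal (L z) := fun z =>
      (ENNReal.ofReal_toReal (hfin z)).symm
    have hLnn : ∀ z, 0 ≤ L z := fun z => ENNReal.toReal_nonneg
    have hLE : ∀ z z', L z ≤ Real.exp (c * D) * L z' := by
      intro z z'
      have h1 := hM z z' S hS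
      have h2 : M z S ≤ ENNReal.ofReal (Real.exp (c * D)) * M z' S := by
        refine h1.trans (mul_le_mul_left ?_ _)
        exact ENNReal.ofReal_le_ofReal (Real.exp_le_exp.2
          (mul_le_mul_of_nonneg_left (hdD z z') hc))
      have h3 : ENNReal.ofReal (Real.exp (c * D)) * M z' S
          = ENNReal.ofReal (Real.exp (c * D) * L z') := by
        rw [hMe z', ← ENNReal.ofReal_mul (Real.exp_nonneg _)]
      rw [hMe z, h3] at h2
      exact (ENNReal.ofReal_le_ofReal_iff (by positivity)).1 h2
    have key := aux_real_mix Q1 Q2 L hQ1nn hQ1sum hQ2nn hQ2sum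
      (Real.exp (c * D)) hE1 hLnn hLE
    have lhs_eq : ∑ z, ENNReal.ofReal (Q1 z) * M z S
        = ENNReal.ofReal (∑ z, Q1 z * L z) := by
      rw [ENNReal.ofReal_sum_of_nonneg (fun z _ => mul_nonneg (hQ1nn z) (hLnn z))]
      exact Finset.sum_congr rfl fun z _ => by
        rw [hMe z, ← ENNReal.ofReal_mul (hQ1nn z)]
    have rhs_eq : ∑ z, ENNReal.ofReal (Q2 z) * M z S
        = ENNReal.ofReal (∑ z, Q2 z * L z) := by
      rw [ENNReal.ofReal_sum_of_nonneg (fun z _ => mul_nonneg (hQ2nn z) (hLnn z))]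
      exact Finset.sum_congr rfl fun z _ => by
        rw [hMe z, ← ENNReal.ofReal_mul (hQ2nn z)]
    rw [lhs_eq, rhs_eq, ← ENNReal.ofReal_mul (by linarith)]
    exact ENNReal.ofReal_le_ofReal key
  · -- some M z S = ⊤ : then RHS = ⊤
    push_neg at hfin
    obtain ⟨z₁, hz₁⟩ := hfin
    have hex : ∃ z, 0 < Q2 z := by
      by_contra h
      push_neg at h
      have : ∑ z, Q2 z = 0 := Finset.sum_eq_zero fun z _ => le_antisymm (h z) (hQ2nn z)
      rw [hQ2sum] at this; norm_num at this
    obtain ⟨z₂, hz₂⟩ := hex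
    have hz₂top : M z₂ S = ⊤ := by
      have h := hM z₁ z₂ S hS
      rw [hz₁] at h
      by_contra hne
      exact (ENNReal.mul_ne_top ENNReal.ofReal_ne_top hne) (top_le_iff.1 h)
    have hsum_top : ∑ z, ENNReal.ofReal (Q2 z) * M z S = ⊤ := by
      apply ENNReal.sum_eq_top.2
      exact ⟨z₂, Finset.mem_univ _, by
        rw [hz₂top, ENNReal.mul_top]
        simp [ENNReal.ofReal_eq_zero, not_le.2 hz₂]⟩
    rw [hsum_top, ENNReal.mul_top]
    · exact le_top
    · simp only [ne_eq, ENNReal.ofReal_eq_zero, not_le]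
      linarith
end
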